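/- arXiv:2210.15712 — 2 statements merged into one kernel-verified Lean document; each statement's English description precedes it below -/
import Mathlib

section
/- If |x(0)| ≤ R and x : [0,T] → ℝ^d satisfies the ODE x'(t) = Σ_{j=1}^N a_j(ω_j(t) - x(t))·(ω_j(t) - x(t)), where each a_j : ℝ^d → ℝ is nonnegative and each control ω_j satisfies |ω_j(t)| ≤ R for all t, then |x(t)| ≤ R for all t ∈ [0,T]. -/
/-!
The derivative of `‖x t‖²` is `2 ⟪x t, x' t⟫`. Wherever `‖x t‖ ≥ R`, every term
`a_j (ω_j - x) • (ω_j - x)` has nonpositive inner product with `x`, because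
`⟪x, ω_j⟫ ≤ ‖x‖ ‖ω_j‖ ≤ ‖x‖²`. A barrier argument against `R² + ε t` for every `ε > 0` then keeps
`‖x t‖²` below `R²`.
-/

open Set Filter Topology

theorem image_le_of_deriv_right_nonpos_of_le {f f' : ℝ → ℝ} {a b C : ℝ}
    (hf : ContinuousOn f (Icc a b)) (hf' : ∀ t ∈ Ico a b, HasDerivWithinAt f (f' t) (Ici t) t)
    (ha : f a ≤ C) (hC : ∀ t ∈ Ico a b, C ≤ f t → f' t ≤ 0) :
    ∀ t ∈ Icc a b, f t ≤ C := by
  intro t ht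
  have barrier : ∀ ε > 0, f t ≤ C + ε * (t - a) := by
    intro ε hε
    refine image_le_of_deriv_right_lt_deriv_boundary' (B := fun s => C + ε * (s - a))
      (B' := fun _ => ε) hf hf' (by simpa using ha) (by fun_prop) (fun s _ => ?_) ?_ ht
    · simpa using ((hasDerivAt_id s).sub_const a).const_mul ε |>.const_add C |>.hasDerivWithinAt
    · intro s hs hfs
      have : C ≤ f s := by rw [hfs]; nlinarith [hs.1]
      linarith [hC s hs this]
  have hlim : Tendsto (fun ε => C + ε * (t - a)) (𝓝[>] 0) (𝓝 C) := by
    have : Tendsto (fun ε => C + ε * (t - a)) (𝓝 0) (𝓝 (C + 0 * (t - a))) :=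
      (continuous_const.add (continuous_id.mul continuous_const)).tendsto 0
    simpa using this.mono_left nhdsWithin_le_nhds
  exact ge_of_tendsto hlim (eventually_nhdsWithin_of_forall barrier)

section InnerProductSpace

variable {E : Type*} [NormedAddCommGroup E] [InnerProductSpace ℝ E]

theorem norm_le_of_inner_deriv_nonpos {x x' : ℝ → E} {a b R : ℝ}
    (hx : ContinuousOn x (Icc a b)) (hx' : ∀ t ∈ Ico a b, HasDerivWithinAt x (x' t) (Ici t) t)
    (ha : ‖x a‖ ≤ R) (hR : ∀ t ∈ Ico a b, R ≤ ‖x t‖ → inner ℝ (x t) (x' t) ≤ 0) :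
    ∀ t ∈ Icc a b, ‖x t‖ ≤ R := by
  have hR0 : 0 ≤ R := (norm_nonneg _).trans ha
  have hsq := image_le_of_deriv_right_nonpos_of_le (f := fun t => ‖x t‖ ^ 2)
    (f' := fun t => 2 * inner ℝ (x t) (x' t)) (C := R ^ 2) (hx.norm.pow 2)
    (fun t ht => (hx' t ht).norm_sq) (by gcongr) fun t ht h => by
      have := hR t ht (abs_le_of_sq_le_sq' h (norm_nonneg _)).2
      linarith
  exact fun t ht => (sq_le_sq₀ (norm_nonneg _) hR0).1 (hsq t ht)

theorem inner_sub_self_nonpos_of_norm_le {x w : E} (h : ‖w‖ ≤ ‖x‖) : inner ℝ x (w - x) ≤ 0 := by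
  rw [inner_sub_right, real_inner_self_eq_norm_sq]
  nlinarith [real_inner_le_norm x w, norm_nonneg x]

theorem inner_sum_smul_sub_self_nonpos {ι : Type*} (s : Finset ι) {c : ι → ℝ} {w : ι → E} {x : E}
    (hc : ∀ j ∈ s, 0 ≤ c j) (hw : ∀ j ∈ s, ‖w j‖ ≤ ‖x‖) :
    inner ℝ x (∑ j ∈ s, c j • (w j - x)) ≤ 0 := by
  rw [inner_sum]
  refine Finset.sum_nonpos fun j hj => ?_
  rw [real_inner_smul_right]
  exact mul_nonpos_of_nonneg_of_nonpos (hc j hj) (inner_sub_self_nonpos_of_norm_le (hw j hj))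

end InnerProductSpace

theorem stmt_0_general (d N : ℕ) (T R : ℝ)
    (a : Fin N → EuclideanSpace ℝ (Fin d) → ℝ)
    (ha : ∀ j z, 0 ≤ a j z)
    (ω : Fin N → ℝ → EuclideanSpace ℝ (Fin d))
    (hω : ∀ j t, ‖ω j t‖ ≤ R)
    (x : ℝ → EuclideanSpace ℝ (Fin d))
    (hx : ∀ t ∈ Icc (0:ℝ) T,
      HasDerivAt x (∑ j, a j (ω j t - x t) • (ω j t - x t)) t)
    (hx0 : ‖x 0‖ ≤ R) :
    ∀ t ∈ Icc (0:ℝ) T, ‖x t‖ ≤ R :=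
  norm_le_of_inner_deriv_nonpos (fun t ht => (hx t ht).continuousAt.continuousWithinAt)
    (fun t ht => (hx t (Ico_subset_Icc_self ht)).hasDerivWithinAt) hx0 fun t _ hRt =>
      inner_sum_smul_sub_self_nonpos _ (fun j _ => ha j _) fun j _ => (hω j t).trans hRt

/-- Invariance of the ball of radius `R` under the judgment dynamics. -/
theorem stmt_0 (d N : ℕ) (T R : ℝ) (hR : 0 < R) (hT : 0 < T)
    (a : Fin N → EuclideanSpace ℝ (Fin d) → ℝ)
    (ha : ∀ j z, 0 ≤ a j z)
    (ω : Fin N → ℝ → EuclideanSpace ℝ (Fin d))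
    (hω : ∀ j t, ‖ω j t‖ ≤ R)
    (x : ℝ → EuclideanSpace ℝ (Fin d))
    (hx : ∀ t ∈ Icc (0:ℝ) T,
      HasDerivAt x (∑ j, a j (ω j t - x t) • (ω j t - x t)) t)
    (hx0 : ‖x 0‖ ≤ R) :
    ∀ t ∈ Icc (0:ℝ) T, ‖x t‖ ≤ R :=
  stmt_0_general d N T R a ha ω hω x hx hx0
end

section
/- Let 𝒜 be a convex subset of a real vector space and J_1, …, J_N : 𝒜 → ℝ convex functionals. If ω* ∈ 𝒜 is Pareto optimal for (J_1, …, J_N), then there exist θ_1, …, θ_N ≥ 0 with Σ_{i=1}^N θ_i = 1 such that ω* minimizes Σ_{i=1}^N θ_i J_i over 𝒜. -/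
/-! Hahn–Banach separates `0` from the open convex set of vectors lying strictly above some
`J ω - J ω₀`, which misses `0` because `ω₀` is (weakly) Pareto optimal. The separating functional
is nonnegative on the closure of that set, which contains the nonnegative orthant and every
`J ω - J ω₀`: the first makes the functional a positive multiple of `x ↦ ∑ i, θ i * x i` with `θ`
in the standard simplex, the second says that `ω₀` minimizes `∑ i, θ i * J i`. -/

open Set Filter Topology

section Scalarization

variable {V ι : Type*}

def strictUpperImage (𝒜 : Set V) (J : ι → V → ℝ) (ω₀ : V) : Set (ι → ℝ) :=
  {x | ∃ ω ∈ 𝒜, ∀ i, J i ω - J i ω₀ < x i}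

variable {𝒜 : Set V} {J : ι → V → ℝ} {ω₀ : V}

theorem convex_strictUpperImage [AddCommGroup V] [Module ℝ V] (h𝒜 : Convex ℝ 𝒜)
    (hJ : ∀ i, ConvexOn ℝ 𝒜 (J i)) :
    Convex ℝ (strictUpperImage 𝒜 J ω₀) := by
  rintro x ⟨ω₁, hω₁, hx⟩ y ⟨ω₂, hω₂, hy⟩ a b ha hb hab
  refine ⟨a • ω₁ + b • ω₂, h𝒜 hω₁ hω₂ ha hb hab, fun i => ?_⟩
  have hJi := (hJ i).2 hω₁ hω₂ ha hb hab
  simp only [smul_eq_mul, Pi.add_apply, Pi.smul_apply] at hJi ⊢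
  have hgap : 0 < a * (x i - (J i ω₁ - J i ω₀)) + b * (y i - (J i ω₂ - J i ω₀)) :=
    convex_Ioi 0 (sub_pos.2 (hx i)) (sub_pos.2 (hy i)) ha hb hab
  linear_combination hJi + hgap + J i ω₀ * hab

theorem isOpen_strictUpperImage [Finite ι] : IsOpen (strictUpperImage 𝒜 J ω₀) := by
  have : strictUpperImage 𝒜 J ω₀ = ⋃ ω ∈ 𝒜, univ.pi fun i => Ioi (J i ω - J i ω₀) := by
    ext x; simp [strictUpperImage]
  rw [this]
  exact isOpen_biUnion fun ω _ => isOpen_set_pi finite_univ fun i _ => isOpen_Ioi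

theorem zero_notMem_strictUpperImage (hω₀ : ¬ ∃ ω ∈ 𝒜, ∀ i, J i ω < J i ω₀) :
    0 ∉ strictUpperImage 𝒜 J ω₀ := by
  rintro ⟨ω, hω, h⟩
  exact hω₀ ⟨ω, hω, fun i => sub_neg.1 (h i)⟩

theorem mem_closure_strictUpperImage {x : ι → ℝ} {ω : V} (hω : ω ∈ 𝒜)
    (hx : ∀ i, J i ω - J i ω₀ ≤ x i) : x ∈ closure (strictUpperImage 𝒜 J ω₀) := by
  have hlim : Tendsto (fun ε : ℝ => x + ε • 1) (𝓝[>] 0) (𝓝 x) := by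
    have : Continuous fun ε : ℝ => x + ε • (1 : ι → ℝ) := by fun_prop
    simpa using (this.tendsto 0).mono_left nhdsWithin_le_nhds
  refine mem_closure_of_tendsto hlim (eventually_nhdsWithin_of_forall fun ε (hε : 0 < ε) => ?_)
  exact ⟨ω, hω, fun i => by simpa using lt_add_of_le_of_pos (hx i) hε⟩

end Scalarization

theorem LinearMap.exists_mem_stdSimplex_eq_mul_sum {ι : Type*} [Fintype ι] [DecidableEq ι]
    (f : (ι → ℝ) →ₗ[ℝ] ℝ) (hf : ∀ x, 0 ≤ x → 0 ≤ f x) (hf1 : 0 < f 1) :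
    ∃ θ ∈ stdSimplex ℝ ι, ∀ x, f x = f 1 * ∑ i, θ i * x i := by
  have hsum (x : ι → ℝ) : f x = ∑ i, x i * f (Pi.single i 1) := by
    rw [f.pi_apply_eq_sum_univ x]
    refine Finset.sum_congr rfl fun i _ => ?_
    congr 2
    ext j
    simp [Pi.single_apply, eq_comm]
  refine ⟨fun i => f (Pi.single i 1) / f 1,
    ⟨fun i => div_nonneg (hf _ (Pi.single_nonneg.2 zero_le_one)) hf1.le, ?_⟩, fun x => ?_⟩
  · rw [← Finset.sum_div, div_eq_one_iff_eq hf1.ne', hsum 1]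
    simp
  · rw [hsum x, Finset.mul_sum]
    refine Finset.sum_congr rfl fun i _ => ?_
    field_simp

/-- Scalarization (converse direction): a Pareto optimum of convex criteria on a convex
set minimizes some convex combination of the criteria. -/
theorem stmt_10 {V : Type*} [AddCommGroup V] [Module ℝ V]
    (N : ℕ) (hN : 1 ≤ N) (𝒜 : Set V) (h𝒜 : Convex ℝ 𝒜)
    (J : Fin N → V → ℝ) (hJ : ∀ i, ConvexOn ℝ 𝒜 (J i))
    (ωstar : V) (hωstar : ωstar ∈ 𝒜)
    (hpareto : ¬ ∃ ω ∈ 𝒜, (∀ i, J i ω ≤ J i ωstar) ∧ (∃ i, J i ω < J i ωstar)) :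
    ∃ θ : Fin N → ℝ, (∀ i, 0 ≤ θ i) ∧ (∑ i, θ i = 1) ∧
      ∀ ω ∈ 𝒜, ∑ i, θ i * J i ωstar ≤ ∑ i, θ i * J i ω := by
  have hweak : ¬ ∃ ω ∈ 𝒜, ∀ i, J i ω < J i ωstar := fun ⟨ω, hω, h⟩ =>
    hpareto ⟨ω, hω, fun i => (h i).le, ⟨0, hN⟩, h ⟨0, hN⟩⟩
  obtain ⟨f, hf⟩ := geometric_hahn_banach_point_open (convex_strictUpperImage h𝒜 hJ)
    isOpen_strictUpperImage (zero_notMem_strictUpperImage hweak)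
  have hf_closure : ∀ x ∈ closure (strictUpperImage 𝒜 J ωstar), 0 ≤ f x := fun x hx => by
    simpa using closure_lt_subset_le continuous_const f.continuous (closure_mono hf hx)
  have hf1 : 0 < f 1 := by simpa using hf 1 ⟨ωstar, hωstar, fun i => by simp⟩
  have hf_nonneg : ∀ x, 0 ≤ x → 0 ≤ f x := fun x hx =>
    hf_closure x (mem_closure_strictUpperImage hωstar fun i => by simpa using hx i)
  obtain ⟨θ, ⟨hθ_nonneg, hθ_sum⟩, hfθ⟩ :=
    (f : (Fin N → ℝ) →ₗ[ℝ] ℝ).exists_mem_stdSimplex_eq_mul_sum hf_nonneg hf1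
  refine ⟨θ, hθ_nonneg, hθ_sum, fun ω hω => ?_⟩
  have hgap := hf_closure _ (mem_closure_strictUpperImage (x := fun i => J i ω - J i ωstar) hω
    fun i => le_rfl)
  rw [← ContinuousLinearMap.coe_coe, hfθ] at hgap
  simpa [mul_sub] using (mul_nonneg_iff_of_pos_left hf1).1 hgap
end
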